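/- arXiv:2005.06999 — 7 statements merged into one kernel-verified Lean document; each statement's English description precedes it below -/
import Mathlib

section
/- Let s ≥ t ≥ 0, and let H be a family of k-subsets of [n] such that every member A of H satisfies |A ∩ [s]| ≥ t. If |H| = Σ_{i=h}^{k} C(a_i,i) − Σ_{j=0}^{t−1} C(s,j)·Σ_{i=h}^{k} C(a_i−s, i−j) for integers a_k > ⋯ > a_h ≥ h ≥ max{t,1}, then the shadow ∂H (all (k−1)-subsets contained in some member of H) satisfies |∂H| ≥ Σ_{i=h}^{k} C(a_i, i−1) − Σ_{j=0}^{t−2} C(s,j)·Σ_{i=h}^{k} C(a_i−s, i−1−j). -/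
/-
Work on the ground set `[m, n]` and induct on `k`, then on `|F|`. Compressions `q ↦ p` with
`m ≤ p < q` keep `F` inside the family, keep its size and do not enlarge its shadow, so `F` may be
assumed shifted towards `m`. Split `F` into `F₀`, the sets avoiding `m`, and the link
`F₁ = {A \ {m} : m ∈ A ∈ F}`. Pascal's rule, applied to `C(s, j)` and `C(a_i, i)`, splits the size
bound as `M = M₀ + M₁` and the shadow bound as `D = M₁ + D₁`, where `D₁` is the shadow bound that
belongs to the size bound `M₁` of the link. Shiftedness gives `∂F₀ ⊆ F₁`, while always
`|∂F| ≥ |F₁| + |∂F₁|`. If `|F₁| < M₁` then `|F₀| ≥ M₀ + 1`; writing `M₀ + 1` as a cascade size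
whose shadow bound is at least `M₁`, induction on `|F|` gives `|F₁| ≥ |∂F₀| ≥ M₁`, a contradiction.
So `|F₁| ≥ M₁`, and induction on `k` gives `|∂F₁| ≥ D₁`.
-/

/-- Binomial coefficient with the convention `C(a,b) = 0` if `b < 0` or `a < b`. -/
def ichoose (a b : ℤ) : ℤ := if 0 ≤ b ∧ b ≤ a then ((a.toNat).choose b.toNat : ℤ) else 0

/-- `EM n k s t` is the family of `k`-subsets `A` of `[n] = {1,…,n}` with `|A ∩ [s]| ≥ t`. -/
def EM (n k s t : ℕ) : Finset (Finset ℕ) :=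
  ((Finset.Icc 1 n).powersetCard k).filter fun A => t ≤ (A ∩ Finset.Icc 1 s).card

open Finset
open scoped FinsetFamily

section ichoose

variable {a b : ℤ}

lemma ichoose_natCast (n k : ℕ) : ichoose n k = n.choose k := by
  unfold ichoose
  split_ifs with h
  · simp
  · rw [Nat.choose_eq_zero_of_lt (by omega), Nat.cast_zero]

lemma ichoose_of_neg (hb : b < 0) : ichoose a b = 0 := if_neg (by omega)

lemma ichoose_of_lt (hab : a < b) : ichoose a b = 0 := if_neg (by omega)

lemma ichoose_nonneg (a b : ℤ) : 0 ≤ ichoose a b := by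
  unfold ichoose; split_ifs <;> positivity

lemma ichoose_pos (hb : 0 ≤ b) (hba : b ≤ a) : 0 < ichoose a b := by
  lift a to ℕ using hb.trans hba
  lift b to ℕ using hb
  rw [ichoose_natCast]
  exact_mod_cast Nat.choose_pos (by omega)

lemma ichoose_self (ha : 0 ≤ a) : ichoose a a = 1 := by
  lift a to ℕ using ha
  simp [ichoose_natCast]

lemma ichoose_sub_one_right (ha : 0 ≤ a) : ichoose a (a - 1) = a := by
  lift a to ℕ using ha
  rcases a with _ | a
  · exact ichoose_of_neg (by norm_num)
  · rw [show ((a + 1 : ℕ) : ℤ) - 1 = a by push_cast; ring, ichoose_natCast,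
      Nat.choose_succ_self_right]

lemma ichoose_pascal (h : a ≠ 0 ∨ b ≠ 0) :
    ichoose a b = ichoose (a - 1) b + ichoose (a - 1) (b - 1) := by
  rcases lt_or_ge b 0 with hb | hb
  · simp [ichoose_of_neg, hb, show b - 1 < 0 by omega]
  rcases lt_or_ge a 1 with ha | ha
  · rcases lt_or_ge a b with hab | hab
    · simp [ichoose_of_lt, hab, show a - 1 < b by omega, show a - 1 < b - 1 by omega]
    · obtain rfl : b = 0 := by omega
      obtain rfl : a = 0 := by omega
      simp at h
  lift a to ℕ using by omega
  lift b to ℕ using hb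
  obtain ⟨a, rfl⟩ : ∃ a', a = a' + 1 := ⟨a - 1, by omega⟩
  rcases b with _ | b
  · rw [show ((a + 1 : ℕ) : ℤ) - 1 = (a : ℕ) by push_cast; ring, ichoose_natCast, ichoose_natCast,
      Nat.cast_zero, zero_sub, ichoose_of_neg (by norm_num)]
    simp
  · simp only [Nat.cast_add, Nat.cast_one, add_sub_cancel_right]
    rw [← Nat.cast_add_one, ← Nat.cast_add_one, ichoose_natCast, ichoose_natCast,
      ichoose_natCast, Nat.choose_succ_succ', Nat.cast_add, add_comm]

end ichoose

/-- For `x ≥ s` this counts the `i`-subsets of `[x]` meeting `[s]` in at least `t` elements. -/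
def cascadeTerm (s t : ℕ) (x i : ℤ) : ℤ :=
  ichoose x i - ∑ j ∈ range t, ichoose s j * ichoose (x - s) (i - j)

section cascadeTerm

variable {s t : ℕ} {x i : ℤ}

lemma sum_range_ichoose_succ_mul (s t : ℕ) (f : ℕ → ℤ) :
    ∑ j ∈ range t, ichoose (s + 1 : ℕ) j * f j =
      ∑ j ∈ range t, ichoose s j * f j + ∑ j ∈ range (t - 1), ichoose s j * f (j + 1) := by
  rcases t with _ | t
  · simp
  have hpascal (j : ℕ) : ichoose (s + 1 : ℕ) j = ichoose s j + ichoose s ((j : ℤ) - 1) := by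
    rw [ichoose_pascal (Or.inl (by omega))]
    push_cast
    ring_nf
  simp only [hpascal, add_mul, sum_add_distrib, add_tsub_cancel_right, add_right_inj]
  rw [sum_range_succ', ichoose_of_neg (by norm_num), zero_mul, add_zero]
  push_cast
  simp

lemma cascadeTerm_succ (h : x ≠ 0 ∨ i ≠ 0) :
    cascadeTerm (s + 1) t x i =
      cascadeTerm s t (x - 1) i + cascadeTerm s (t - 1) (x - 1) (i - 1) := by
  unfold cascadeTerm
  rw [ichoose_pascal h, sum_range_ichoose_succ_mul]
  have e1 : x - ((s : ℤ) + 1) = x - 1 - s := by ring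
  have e2 (j : ℕ) : i - ((j : ℤ) + 1) = i - 1 - j := by ring
  push_cast
  simp only [e1, e2]
  ring

lemma cascadeTerm_of_neg (hi : i < 0) : cascadeTerm s t x i = 0 := by
  rw [cascadeTerm, ichoose_of_neg hi, sum_eq_zero fun j _ =>
    mul_eq_zero_of_right _ (ichoose_of_neg (by omega)), sub_zero]

lemma cascadeTerm_sub_one_self (hts : t ≤ s) (i : ℤ) : cascadeTerm s t (i - 1) i = 0 := by
  rw [cascadeTerm, ichoose_of_lt (by omega), sum_eq_zero fun j hj =>
    mul_eq_zero_of_right _ (ichoose_of_lt (by rw [mem_range] at hj; omega)), sub_zero]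

lemma cascadeTerm_self (hts : t ≤ s) (hi : 0 ≤ i) : cascadeTerm s t i i = 1 := by
  rw [cascadeTerm, ichoose_self hi, sum_eq_zero fun j hj =>
    mul_eq_zero_of_right _ (ichoose_of_lt (by rw [mem_range] at hj; omega)), sub_zero]

lemma cascadeTerm_self_sub_one (hts : t ≤ s) (hi : 0 ≤ i) :
    cascadeTerm s (t - 1) i (i - 1) = i := by
  rw [cascadeTerm, ichoose_sub_one_right hi, sum_eq_zero fun j hj =>
    mul_eq_zero_of_right _ (ichoose_of_lt (by rw [mem_range] at hj; omega)), sub_zero]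

lemma cascadeTerm_eq_zero_of_lt (hst : s < t) (hti : (t : ℤ) ≤ i) : cascadeTerm s t x i = 0 := by
  induction s generalizing t x i with
  | zero =>
    rw [cascadeTerm, sum_eq_single_of_mem 0 (mem_range.2 hst) fun j _ hj =>
      mul_eq_zero_of_left (ichoose_of_lt (by omega)) _]
    simp [ichoose_self]
  | succ s ih =>
    rw [cascadeTerm_succ (Or.inr (by omega)), ih (by omega) hti, ih (by omega) (by omega), add_zero]

lemma cascadeTerm_pos (hts : t ≤ s) (hti : (t : ℤ) ≤ i) (hix : i ≤ x) :
    0 < cascadeTerm s t x i := by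
  induction s generalizing t x i with
  | zero =>
    obtain rfl : t = 0 := by omega
    simpa [cascadeTerm] using ichoose_pos hti hix
  | succ s ih =>
    rcases t with _ | t
    · simpa [cascadeTerm] using ichoose_pos hti hix
    rw [cascadeTerm_succ (Or.inr (by omega))]
    have hfirst : 0 ≤ cascadeTerm s (t + 1) (x - 1) i := by
      rcases lt_or_ge s (t + 1) with hst | hts'
      · exact (cascadeTerm_eq_zero_of_lt hst hti).ge
      rcases eq_or_lt_of_le hix with rfl | hix'
      · exact (cascadeTerm_sub_one_self hts' _).ge
      · exact (ih hts' hti (by omega)).le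
    have hsecond := ih (t := t) (x := x - 1) (i := i - 1) (by omega)
      (by push_cast at hti ⊢; omega) (by omega)
    simp only [add_tsub_cancel_right] at hsecond ⊢
    linarith

end cascadeTerm

def cascadeSize (s t h k : ℕ) (a : ℕ → ℤ) : ℤ := ∑ i ∈ Icc h k, cascadeTerm s t (a i) i

def cascadeShadow (s t h k : ℕ) (a : ℕ → ℤ) : ℤ :=
  ∑ i ∈ Icc h k, cascadeTerm s (t - 1) (a i) (i - 1)

section cascadeSum

variable {s t h k : ℕ} {a : ℕ → ℤ}

lemma cascadeSize_eq_sub (s t h k : ℕ) (a : ℕ → ℤ) :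
    cascadeSize s t h k a = ∑ i ∈ Icc h k, ichoose (a i) i -
      ∑ j ∈ range t, ichoose s j * ∑ i ∈ Icc h k, ichoose (a i - s) ((i : ℤ) - j) := by
  simp only [cascadeSize, cascadeTerm, sum_sub_distrib, mul_sum]
  rw [sum_comm]

lemma cascadeShadow_eq_sub (s t h k : ℕ) (a : ℕ → ℤ) :
    cascadeShadow s t h k a = ∑ i ∈ Icc h k, ichoose (a i) ((i : ℤ) - 1) -
      ∑ j ∈ range (t - 1), ichoose s j * ∑ i ∈ Icc h k, ichoose (a i - s) ((i : ℤ) - 1 - j) := by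
  simp only [cascadeShadow, cascadeTerm, sum_sub_distrib, mul_sum]
  rw [sum_comm]

lemma sum_Icc_eq_add_sum_Icc {M : Type*} [AddCommMonoid M] (f : ℕ → M) (hhk : h ≤ k) :
    ∑ i ∈ Icc h k, f i = f h + ∑ i ∈ Icc (h + 1) k, f i := by
  rw [Icc_eq_cons_Ioc hhk, sum_cons, Icc_add_one_left_eq_Ioc]

lemma cascadeSize_eq_add (hhk : h ≤ k) :
    cascadeSize s t h k a = cascadeTerm s t (a h) h + cascadeSize s t (h + 1) k a :=
  sum_Icc_eq_add_sum_Icc _ hhk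

lemma cascadeShadow_eq_add (hhk : h ≤ k) :
    cascadeShadow s t h k a = cascadeTerm s (t - 1) (a h) (h - 1) + cascadeShadow s t (h + 1) k a :=
  sum_Icc_eq_add_sum_Icc _ hhk

lemma cascadeShadow_add_one :
    cascadeShadow s t (h + 1) (k + 1) a = cascadeSize s (t - 1) h k (fun i => a (i + 1)) := by
  rw [cascadeShadow, ← map_add_right_Icc, sum_map]
  simp [cascadeSize]

lemma cascadeSize_succ (ha : ∀ i ∈ Icc h k, 0 < a i) :
    cascadeSize (s + 1) t h k a =
      cascadeSize s t h k (fun i => a i - 1) + cascadeShadow s t h k (fun i => a i - 1) := by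
  rw [cascadeSize, cascadeSize, cascadeShadow, ← sum_add_distrib]
  exact sum_congr rfl fun i hi => cascadeTerm_succ (Or.inl (ha i hi).ne')

lemma cascadeSize_eq_zero_of_lt (hst : s < t) (hth : t ≤ h) : cascadeSize s t h k a = 0 :=
  sum_eq_zero fun i hi => cascadeTerm_eq_zero_of_lt hst (by rw [mem_Icc] at hi; omega)

end cascadeSum

lemma StrictMonoOn.sub_le_sub_of_le {f : ℕ → ℤ} {h k i j : ℕ} (hf : StrictMonoOn f (Set.Icc h k))
    (hhi : h ≤ i) (hij : i ≤ j) (hjk : j ≤ k) : (j : ℤ) - i ≤ f j - f i := by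
  induction j, hij using Nat.le_induction with
  | base => simp
  | succ j hij ih =>
    have := hf ⟨by omega, by omega⟩ ⟨by omega, hjk⟩ (Nat.lt_succ_self j)
    have := ih (by omega)
    push_cast
    omega

structure IsCascade (h k : ℕ) (a : ℕ → ℤ) : Prop where
  le_apply : ∀ i ∈ Icc h k, (i : ℤ) ≤ a i
  strictMonoOn : StrictMonoOn a (Set.Icc h k)

section IsCascade

variable {s t h k : ℕ} {a : ℕ → ℤ}

lemma isCascade_of_strictMonoOn (hah : h ≤ k → (h : ℤ) ≤ a h)
    (ha : StrictMonoOn a (Set.Icc h k)) : IsCascade h k a where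
  le_apply i hi := by
    rw [mem_Icc] at hi
    have := ha.sub_le_sub_of_le le_rfl hi.1 hi.2
    have := hah (hi.1.trans hi.2)
    omega
  strictMonoOn := ha

lemma IsCascade.mono {h' : ℕ} (ha : IsCascade h k a) (hh : h ≤ h') : IsCascade h' k a :=
  ⟨fun i hi => ha.le_apply i (Icc_subset_Icc_left hh hi),
    ha.strictMonoOn.mono (Set.Icc_subset_Icc_left hh)⟩

lemma IsCascade.sub_one (ha : IsCascade h k a) (hah : h ≤ k → (h : ℤ) < a h) :
    IsCascade h k (fun i => a i - 1) :=
  isCascade_of_strictMonoOn (fun hhk => by linarith [hah hhk])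
    fun _ hi _ hj hij => sub_lt_sub_right (ha.strictMonoOn hi hj hij) 1

lemma IsCascade.shift (ha : IsCascade (h + 1) (k + 1) a) :
    IsCascade h k (fun i => a (i + 1) - 1) where
  le_apply i hi := by
    have := ha.le_apply (i + 1) (by rw [mem_Icc] at hi ⊢; omega)
    push_cast at this
    linarith
  strictMonoOn _ hi _ hj hij := sub_lt_sub_right (ha.strictMonoOn
    ⟨Nat.succ_le_succ hi.1, Nat.succ_le_succ hi.2⟩ ⟨Nat.succ_le_succ hj.1, Nat.succ_le_succ hj.2⟩
    (Nat.succ_lt_succ hij)) 1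

lemma IsCascade.update {x : ℤ} (ha : IsCascade (h + 1) k a) (hx : (h : ℤ) ≤ x)
    (hxa : h + 1 ≤ k → x < a (h + 1)) : IsCascade h k (Function.update a h x) := by
  refine isCascade_of_strictMonoOn (fun _ => by simpa using hx)
    fun i ⟨hhi, hik⟩ j ⟨hhj, hjk⟩ hij => ?_
  rw [Function.update_of_ne (show j ≠ h by omega)]
  by_cases hih : i = h
  · subst hih
    rw [Function.update_self]
    exact (hxa (by omega)).trans_le
      (ha.strictMonoOn.monotoneOn ⟨le_rfl, by omega⟩ ⟨by omega, hjk⟩ (by omega))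
  · rw [Function.update_of_ne hih]
    exact ha.strictMonoOn ⟨by omega, hik⟩ ⟨by omega, hjk⟩ hij

lemma cascadeSize_pos (hts : t ≤ s) (hth : t ≤ h) (hhk : h ≤ k) (ha : IsCascade h k a) :
    0 < cascadeSize s t h k a :=
  sum_pos (fun i hi => cascadeTerm_pos hts (by rw [mem_Icc] at hi; omega) (ha.le_apply i hi))
    (nonempty_Icc.2 hhk)

end IsCascade

section cascadeStep

variable {s t h k : ℕ} {a : ℕ → ℤ}

lemma cascadeSize_congr {b : ℕ → ℤ} (hab : ∀ i ∈ Icc h k, a i = b i) :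
    cascadeSize s t h k a = cascadeSize s t h k b :=
  sum_congr rfl fun i hi => by rw [hab i hi]

lemma cascadeShadow_congr {b : ℕ → ℤ} (hab : ∀ i ∈ Icc h k, a i = b i) :
    cascadeShadow s t h k a = cascadeShadow s t h k b :=
  sum_congr rfl fun i hi => by rw [hab i hi]

lemma cascadeSize_sub_one_of_eq (hts : t ≤ s) (hhk : h + 1 ≤ k) (hah : a (h + 1) = h + 1) :
    cascadeSize s t (h + 1) k (fun i => a i - 1) =
      cascadeSize s t (h + 2) k (fun i => a i - 1) := by
  rw [cascadeSize_eq_add hhk, hah, ← Nat.cast_add_one, cascadeTerm_sub_one_self hts, zero_add]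

lemma cascadeShadow_sub_one_of_eq (hts : t ≤ s) (hhk : h + 1 ≤ k) (hah : a (h + 1) = h + 1) :
    cascadeShadow s t (h + 1) k (fun i => a i - 1) =
      1 + cascadeShadow s t (h + 2) k (fun i => a i - 1) := by
  rw [cascadeShadow_eq_add hhk, hah]
  push_cast
  rw [add_sub_cancel_right, cascadeTerm_self (by omega) (by positivity)]

/-- On the initial run of indices `i > h` with `a i = i`, `a - 1` contributes `0` to the size and
`1` per index to the shadow. Replacing the run by the single term `C(h', h') = 1`, where `h'` ends
the run (`h' = h` if it is empty), whose shadow term is `C(h', h' - 1) = h'`, costs `1` in size and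
gains at least `h` in shadow. -/
theorem exists_cascade_extend_sub_one {h : ℕ} (hts : t ≤ s) (hth : t ≤ h) (hhk : h ≤ k)
    (ha : IsCascade (h + 1) k a) :
    ∃ h' d, t ≤ h' ∧ IsCascade h' k d ∧
      cascadeSize s t h' k d ≤ cascadeSize s t (h + 1) k (fun i => a i - 1) + 1 ∧
      cascadeShadow s t (h + 1) k (fun i => a i - 1) + h ≤ cascadeShadow s t h' k d := by
  by_cases hdeg : h + 1 ≤ k ∧ a (h + 1) = h + 1
  · obtain ⟨h', d, hth', hd, hsize, hshadow⟩ :=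
      exists_cascade_extend_sub_one (h := h + 1) hts (by omega) hdeg.1 (ha.mono (by omega))
    refine ⟨h', d, hth', hd, ?_, ?_⟩
    · rwa [cascadeSize_sub_one_of_eq hts hdeg.1 hdeg.2]
    · rw [cascadeShadow_sub_one_of_eq hts hdeg.1 hdeg.2]
      push_cast at hshadow
      linarith
  have hgap (hk : h + 1 ≤ k) : (h : ℤ) + 1 < a (h + 1) := by
    have := ha.le_apply (h + 1) (by rw [mem_Icc]; omega)
    push_cast at this
    exact lt_of_le_of_ne this fun he => hdeg ⟨hk, he.symm⟩
  have hupd (i : ℕ) (hi : i ∈ Icc (h + 1) k) :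
      Function.update (fun i => a i - 1) h (h : ℤ) i = a i - 1 :=
    Function.update_of_ne (by rw [mem_Icc] at hi; omega) _ _
  refine ⟨h, _, hth, (ha.sub_one fun hk => by push_cast; linarith [hgap hk]).update le_rfl
    fun hk => by linarith [hgap hk], ?_, ?_⟩
  · rw [cascadeSize_eq_add hhk, cascadeSize_congr hupd, Function.update_self,
      cascadeTerm_self hts (by positivity), add_comm]
  · rw [cascadeShadow_eq_add hhk, cascadeShadow_congr hupd, Function.update_self,
      cascadeTerm_self_sub_one hts (by positivity), add_comm]
termination_by k - h

theorem exists_cascade_sub_one (hts : t ≤ s) (hth : t ≤ h + 1) (ha : IsCascade (h + 1) k a) :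
    ∃ h' d, t ≤ h' ∧ IsCascade h' k d ∧
      cascadeSize s t h' k d ≤ cascadeSize s t (h + 1) k (fun i => a i - 1) + 1 ∧
      cascadeShadow s t (h + 1) k (fun i => a i - 1) ≤ cascadeShadow s t h' k d := by
  by_cases hdeg : h + 1 ≤ k ∧ a (h + 1) = h + 1
  · obtain ⟨h', d, hth', hd, hsize, hshadow⟩ :=
      exists_cascade_extend_sub_one hts hth hdeg.1 (ha.mono (by omega))
    refine ⟨h', d, hth', hd, ?_, ?_⟩
    · rwa [cascadeSize_sub_one_of_eq hts hdeg.1 hdeg.2]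
    · rw [cascadeShadow_sub_one_of_eq hts hdeg.1 hdeg.2]
      push_cast at hshadow
      linarith
  refine ⟨h + 1, _, hth, ha.sub_one fun hk => ?_, by linarith, le_rfl⟩
  have := ha.le_apply (h + 1) (by rw [mem_Icc]; omega)
  exact lt_of_le_of_ne this fun he => hdeg ⟨hk, he.symm⟩

end cascadeStep

/-- `EM` on the ground set `[m, n]`, whose first `s` elements play the role of `[s]`. -/
def EMIcc (m n k s t : ℕ) : Finset (Finset ℕ) :=
  ((Icc m n).powersetCard k).filter fun A => t ≤ #(A ∩ Ico m (m + s))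

section EMIcc

variable {m n k s t p q : ℕ} {A : Finset ℕ} {G : Finset (Finset ℕ)}

lemma mem_EMIcc : A ∈ EMIcc m n k s t ↔ A ⊆ Icc m n ∧ #A = k ∧ t ≤ #(A ∩ Ico m (m + s)) := by
  rw [EMIcc, mem_filter, mem_powersetCard, and_assoc]

lemma EM_eq_EMIcc (n k s t : ℕ) : EM n k s t = EMIcc 1 n k s t := by
  have : Icc 1 s = Ico 1 (1 + s) := by ext; simp only [mem_Icc, mem_Ico]; omega
  rw [EM, EMIcc, this]

lemma EMIcc_eq_empty_of_lt (hst : s < t) : EMIcc m n k s t = ∅ :=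
  filter_false_of_mem fun A _ ht => by
    have := card_le_card (inter_subset_right (s₁ := A) (s₂ := Ico m (m + s)))
    rw [Nat.card_Ico] at this
    omega

lemma le_of_mem_EMIcc {x : ℕ} (hA : A ∈ EMIcc m n k s t) (hx : x ∈ A) : m ≤ x :=
  (mem_Icc.1 ((mem_EMIcc.1 hA).1 hx)).1

lemma erase_insert_mem_EMIcc (hA : A ∈ EMIcc m n k s t) (hmp : m ≤ p) (hpq : p < q) (hp : p ∉ A)
    (hq : q ∈ A) : (insert p A).erase q ∈ EMIcc m n k s t := by
  obtain ⟨hAmn, hAk, hAt⟩ := mem_EMIcc.1 hA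
  have hqn := (mem_Icc.1 (hAmn hq)).2
  refine mem_EMIcc.2 ⟨fun x hx => ?_, ?_, hAt.trans ?_⟩
  · rcases mem_insert.1 (mem_erase.1 hx).2 with rfl | hxA
    · exact mem_Icc.2 ⟨hmp, by omega⟩
    · exact hAmn hxA
  · rw [card_erase_of_mem (mem_insert_of_mem hq), card_insert_of_notMem hp, hAk, Nat.add_sub_cancel]
  · refine card_le_card_of_injOn (Equiv.swap p q) (fun x hx => ?_) (Equiv.swap p q).injective.injOn
    obtain ⟨hxA, hxI⟩ := mem_inter.1 hx
    have hxp : x ≠ p := fun h => hp (h ▸ hxA)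
    rcases eq_or_ne x q with rfl | hxq
    · rw [Equiv.swap_apply_right]
      refine mem_inter.2 ⟨mem_erase.2 ⟨hpq.ne, mem_insert_self p A⟩, ?_⟩
      rw [mem_Ico] at hxI ⊢
      omega
    · rw [Equiv.swap_apply_of_ne_of_ne hxp hxq]
      exact mem_inter.2 ⟨mem_erase.2 ⟨hxq, mem_insert_of_mem hxA⟩, hxI⟩

lemma inter_Ico_eq_of_notMem (hm : m ∉ A) :
    A ∩ Ico m (m + (s + 1)) = A ∩ Ico (m + 1) (m + 1 + s) := by
  ext x
  simp only [mem_inter, mem_Ico]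
  constructor
  · rintro ⟨hx, h1, h2⟩
    exact ⟨hx, lt_of_le_of_ne h1 fun h => hm (h ▸ hx), by omega⟩
  · rintro ⟨hx, h1, h2⟩
    exact ⟨hx, by omega, by omega⟩

lemma nonMemberSubfamily_subset_EMIcc (hG : G ⊆ EMIcc m n k (s + 1) t) :
    G.nonMemberSubfamily m ⊆ EMIcc (m + 1) n k s t := by
  intro A hA
  obtain ⟨hAG, hmA⟩ := mem_nonMemberSubfamily.1 hA
  obtain ⟨hAmn, hAk, hAt⟩ := mem_EMIcc.1 (hG hAG)
  refine mem_EMIcc.2 ⟨fun x hx => ?_, hAk, (inter_Ico_eq_of_notMem hmA).symm ▸ hAt⟩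
  have := mem_Icc.1 (hAmn hx)
  exact mem_Icc.2 ⟨lt_of_le_of_ne this.1 fun h => hmA (h ▸ hx), this.2⟩

lemma memberSubfamily_subset_EMIcc (hG : G ⊆ EMIcc m n (k + 1) (s + 1) t) :
    G.memberSubfamily m ⊆ EMIcc (m + 1) n k s (t - 1) := by
  intro A hA
  obtain ⟨hAG, hmA⟩ := mem_memberSubfamily.1 hA
  obtain ⟨hAmn, hAk, hAt⟩ := mem_EMIcc.1 (hG hAG)
  rw [insert_inter_of_mem (by simp), card_insert_of_notMem (by simp [hmA]),
    inter_Ico_eq_of_notMem hmA] at hAt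
  rw [card_insert_of_notMem hmA] at hAk
  refine mem_EMIcc.2 ⟨fun x hx => ?_, by omega, by omega⟩
  have := mem_Icc.1 (hAmn (mem_insert_of_mem hx))
  exact mem_Icc.2 ⟨lt_of_le_of_ne this.1 fun h => hmA (h ▸ hx), this.2⟩

end EMIcc

lemma UV.compress_singleton {α : Type*} [DecidableEq α] (p q : α) (A : Finset α) :
    UV.compress {p} {q} A = if p ∉ A ∧ q ∈ A then (insert p A).erase q else A := by
  simp only [UV.compress, disjoint_singleton_left, singleton_subset_iff]
  split_ifs
  · rw [sup_eq_union, union_comm, ← insert_eq, sdiff_singleton_eq_erase]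
  · rfl

lemma sum_erase_insert_lt {p q : ℕ} {A : Finset ℕ} (hpq : p < q) (hp : p ∉ A) (hq : q ∈ A) :
    ∑ x ∈ (insert p A).erase q, x < ∑ x ∈ A, x := by
  have := sum_erase_add (insert p A) (fun x => x) (mem_insert_of_mem hq : q ∈ insert p A)
  rw [sum_insert hp] at this
  omega

lemma sum_sum_compression_lt {p q : ℕ} {A : Finset ℕ} {𝒜 : Finset (Finset ℕ)} (hpq : p < q)
    (hA : A ∈ 𝒜) (hp : p ∉ A) (hq : q ∈ A) (hA' : (insert p A).erase q ∉ 𝒜) :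
    ∑ B ∈ UV.compression {p} {q} 𝒜, ∑ x ∈ B, x < ∑ B ∈ 𝒜, ∑ x ∈ B, x := by
  have hC (B : Finset ℕ) (hB : UV.compress {p} {q} B ≠ B) :
      ∑ x ∈ UV.compress {p} {q} B, x < ∑ x ∈ B, x := by
    rw [UV.compress_singleton] at hB ⊢
    split_ifs at hB ⊢ with h
    · exact sum_erase_insert_lt hpq h.1 h.2
    · exact (hB rfl).elim
  rw [UV.compression, sum_union UV.compress_disjoint, filter_image, sum_image UV.compress_injOn,
    ← sum_filter_add_sum_filter_not 𝒜 (fun B => UV.compress {p} {q} B ∈ 𝒜)]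
  refine (add_lt_add_iff_left _).2 (sum_lt_sum_of_nonempty ⟨A, ?_⟩ fun B hB => hC B ?_)
  · rw [mem_filter, UV.compress_singleton, if_pos ⟨hp, hq⟩]
    exact ⟨hA, hA'⟩
  · exact fun h => (mem_filter.1 hB).2 (h.symm ▸ (mem_filter.1 hB).1)

def IsShiftedFrom (m : ℕ) (G : Finset (Finset ℕ)) : Prop :=
  ∀ A ∈ G, ∀ p q, m ≤ p → p < q → p ∉ A → q ∈ A → (insert p A).erase q ∈ G

section shifting

variable {m n k s t : ℕ} {F G : Finset (Finset ℕ)}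

lemma compression_subset_EMIcc {p q : ℕ} (hmp : m ≤ p) (hpq : p < q)
    (hG : G ⊆ EMIcc m n k s t) : UV.compression {p} {q} G ⊆ EMIcc m n k s t := by
  intro B hB
  rcases UV.mem_compression.1 hB with ⟨hB, -⟩ | ⟨-, A, hA, rfl⟩
  · exact hG hB
  rw [UV.compress_singleton]
  split_ifs with h
  · exact erase_insert_mem_EMIcc (hG hA) hmp hpq h.1 h.2
  · exact hG hA

/-- Among the families with the size of `F` and no larger shadow, one minimising the total sum of
its elements is stable under every compression `q ↦ p`. -/
theorem exists_isShiftedFrom (hF : F ⊆ EMIcc m n k s t) :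
    ∃ G ⊆ EMIcc m n k s t, #G = #F ∧ #(∂ G) ≤ #(∂ F) ∧ IsShiftedFrom m G := by
  obtain ⟨G, hG, hmin⟩ :=
    ((EMIcc m n k s t).powerset.filter fun G => #G = #F ∧ #(∂ G) ≤ #(∂ F)).exists_min_image
      (fun G => ∑ A ∈ G, ∑ x ∈ A, x) ⟨F, mem_filter.2 ⟨mem_powerset.2 hF, rfl, le_rfl⟩⟩
  simp only [mem_filter, mem_powerset] at hG hmin
  refine ⟨G, hG.1, hG.2.1, hG.2.2, fun A hA p q hmp hpq hp hq => ?_⟩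
  by_contra hA'
  have hcomp := hmin (UV.compression {p} {q} G) ⟨compression_subset_EMIcc hmp hpq hG.1,
    (UV.card_compression _ _ _).trans hG.2.1,
    (UV.card_shadow_compression_le _ _ fun x hx => ⟨q, mem_singleton_self q, by
      rw [mem_singleton.1 hx, erase_singleton, erase_singleton]
      exact UV.isCompressed_self _ _⟩).trans hG.2.2⟩
  exact (sum_sum_compression_lt hpq hA hp hq hA').not_ge hcomp

end shifting

lemma card_memberSubfamily_add_card_shadow_le {α : Type*} [DecidableEq α] (a : α)
    (𝒜 : Finset (Finset α)) : #(𝒜.memberSubfamily a) + #(∂ (𝒜.memberSubfamily a)) ≤ #(∂ 𝒜) := by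
  set 𝒜₁ := 𝒜.memberSubfamily a
  have hnot (B : Finset α) (hB : B ∈ ∂ 𝒜₁) : a ∉ B := fun ha => by
    obtain ⟨C, hC, hBC⟩ := exists_subset_of_mem_shadow hB
    exact (mem_memberSubfamily.1 hC).2 (hBC ha)
  have hsub : 𝒜₁ ∪ (∂ 𝒜₁).image (insert a) ⊆ ∂ 𝒜 := by
    refine union_subset (fun B hB => ?_) fun B hB => ?_
    · obtain ⟨hB, haB⟩ := mem_memberSubfamily.1 hB
      exact mem_shadow_iff_insert_mem.2 ⟨a, haB, hB⟩
    · obtain ⟨C, hC, rfl⟩ := mem_image.1 hB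
      obtain ⟨x, hxC, hxC'⟩ := mem_shadow_iff_insert_mem.1 hC
      obtain ⟨hins, hax⟩ := mem_memberSubfamily.1 hxC'
      refine mem_shadow_iff_insert_mem.2 ⟨x, ?_, by rwa [insert_comm]⟩
      rw [mem_insert, not_or]
      exact ⟨fun h => hax (h ▸ mem_insert_self _ _), hxC⟩
  have hdisj : Disjoint 𝒜₁ ((∂ 𝒜₁).image (insert a)) := disjoint_left.2 fun B hB hB' => by
    obtain ⟨C, -, rfl⟩ := mem_image.1 hB'
    exact (mem_memberSubfamily.1 hB).2 (mem_insert_self _ _)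
  have hinj : Set.InjOn (insert a) (∂ 𝒜₁ : Set (Finset α)) := fun B hB C hC h => by
    rw [← erase_insert (hnot B hB), h, erase_insert (hnot C hC)]
  calc #𝒜₁ + #(∂ 𝒜₁) = #(𝒜₁ ∪ (∂ 𝒜₁).image (insert a)) := by
        rw [card_union_of_disjoint hdisj, card_image_of_injOn hinj]
    _ ≤ #(∂ 𝒜) := card_le_card hsub

namespace IsShiftedFrom

variable {m : ℕ} {G : Finset (Finset ℕ)}

lemma shadow_nonMemberSubfamily_subset (hG : IsShiftedFrom m G) (hm : ∀ A ∈ G, ∀ x ∈ A, m ≤ x) :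
    ∂ (G.nonMemberSubfamily m) ⊆ G.memberSubfamily m := by
  intro B hB
  obtain ⟨A, hA, x, hx, rfl⟩ := mem_shadow_iff.1 hB
  obtain ⟨hAG, hmA⟩ := mem_nonMemberSubfamily.1 hA
  have hxm : x ≠ m := fun h => hmA (h ▸ hx)
  refine mem_memberSubfamily.2 ⟨?_, fun h => hmA (mem_of_mem_erase h)⟩
  rw [← erase_insert_of_ne hxm.symm]
  exact hG A hAG m x le_rfl (lt_of_le_of_ne (hm A hAG x hx) hxm.symm) hmA hx

lemma memberSubfamily_nonempty (hG : IsShiftedFrom m G) (hm : ∀ A ∈ G, ∀ x ∈ A, m ≤ x)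
    {A : Finset ℕ} (hA : A ∈ G) (hAne : A.Nonempty) : (G.memberSubfamily m).Nonempty := by
  obtain ⟨A', hA', hmA'⟩ : ∃ A' ∈ G, m ∈ A' := by
    by_cases hmA : m ∈ A
    · exact ⟨A, hA, hmA⟩
    obtain ⟨x, hx⟩ := hAne
    have hxm : x ≠ m := fun h => hmA (h ▸ hx)
    exact ⟨_, hG A hA m x le_rfl (lt_of_le_of_ne (hm A hA x hx) hxm.symm) hmA hx,
      mem_erase.2 ⟨hxm.symm, mem_insert_self _ _⟩⟩
  exact ⟨A'.erase m, mem_memberSubfamily.2 ⟨by rwa [insert_erase hmA'], notMem_erase _ _⟩⟩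

end IsShiftedFrom

def ShadowBound (k : ℕ) (F : Finset (Finset ℕ)) : Prop :=
  ∀ ⦃m n s t h : ℕ⦄ ⦃a : ℕ → ℤ⦄, t ≤ s → t ≤ h → IsCascade h k a → F ⊆ EMIcc m n k s t →
    cascadeSize s t h k a ≤ #F → cascadeShadow s t h k a ≤ #(∂ F)

section shadowBound

variable {m n k s t h : ℕ} {a : ℕ → ℤ} {F G : Finset (Finset ℕ)}

lemma cascadeShadow_sub_one_le_card_memberSubfamily
    (ihG : ∀ G', #G' < #G → ShadowBound (k + 1) G')
    (hth : t ≤ h + 1) (ha : IsCascade (h + 1) (k + 1) a)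
    (hG : G ⊆ EMIcc m n (k + 1) (s + 1) t) (hshift : IsShiftedFrom m G) (hGne : G.Nonempty)
    (hM : cascadeSize s t (h + 1) (k + 1) (fun i => a i - 1) +
      cascadeShadow s t (h + 1) (k + 1) (fun i => a i - 1) ≤ #G) :
    cascadeShadow s t (h + 1) (k + 1) (fun i => a i - 1) ≤ #(G.memberSubfamily m) := by
  have hsplit := card_memberSubfamily_add_card_nonMemberSubfamily m G
  have hG0 := nonMemberSubfamily_subset_EMIcc hG
  by_contra! hlt
  zify at hsplit
  rcases lt_or_ge s t with hst | hts'
  · rw [EMIcc_eq_empty_of_lt hst, subset_empty] at hG0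
    rw [hG0, card_empty, Nat.cast_zero, add_zero] at hsplit
    rw [cascadeSize_eq_zero_of_lt hst hth, zero_add] at hM
    linarith
  have hm (A) (hA : A ∈ G) (x) (hx : x ∈ A) : m ≤ x := le_of_mem_EMIcc (hG hA) hx
  obtain ⟨A, hA⟩ := hGne
  have hG1 := hshift.memberSubfamily_nonempty hm hA
    (card_pos.1 (by rw [(mem_EMIcc.1 (hG hA)).2.1]; omega))
  obtain ⟨h', d, hth', hd, hsize, hshadow⟩ := exists_cascade_sub_one hts' hth ha
  have hG0card : #(G.nonMemberSubfamily m) < #G := by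
    have := hG1.card_pos
    zify
    linarith
  have hbound := ihG _ hG0card hts' hth' hd hG0 (by linarith)
  have hsub := card_le_card (hshift.shadow_nonMemberSubfamily_subset hm)
  zify at hsub
  linarith

lemma shadowBound_step (ihk : ∀ G, ShadowBound k G) (ihF : ∀ G, #G < #F → ShadowBound (k + 1) G)
    (hts : t ≤ s + 1) (hth : t ≤ h + 1) (ha : IsCascade (h + 1) (k + 1) a)
    (hF : F ⊆ EMIcc m n (k + 1) (s + 1) t) (hM : cascadeSize (s + 1) t (h + 1) (k + 1) a ≤ #F) :
    cascadeShadow (s + 1) t (h + 1) (k + 1) a ≤ #(∂ F) := by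
  rcases lt_or_ge k h with hkh | hhk
  · rw [cascadeShadow, Icc_eq_empty (by omega), sum_empty]
    positivity
  obtain ⟨G, hGF, hGcard, hGshadow, hshift⟩ := exists_isShiftedFrom hF
  have hGne : G.Nonempty := by
    rw [← card_pos, hGcard]
    exact_mod_cast (cascadeSize_pos hts hth (by omega) ha).trans_le hM
  have hpos (i : ℕ) (hi : i ∈ Icc (h + 1) (k + 1)) : 0 < a i := by
    have := ha.le_apply i hi
    rw [mem_Icc] at hi
    omega
  have hsize := cascadeSize_succ (s := s) (t := t) hpos
  have hshadow : cascadeShadow (s + 1) t (h + 1) (k + 1) a =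
      cascadeShadow s t (h + 1) (k + 1) (fun i => a i - 1) +
        cascadeShadow s (t - 1) h k (fun i => a (i + 1) - 1) := by
    rw [cascadeShadow_add_one, cascadeShadow_add_one,
      cascadeSize_succ fun i hi => hpos (i + 1) (by rw [mem_Icc] at hi ⊢; omega)]
  have hlink := cascadeShadow_sub_one_le_card_memberSubfamily (fun G' hG' => ihF G' (hGcard ▸ hG'))
    hth ha hGF hshift hGne (hsize ▸ hGcard ▸ hM)
  rw [cascadeShadow_add_one] at hlink
  have hlinkShadow := ihk (G.memberSubfamily m) (by omega) (by omega) ha.shift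
    (memberSubfamily_subset_EMIcc hGF) hlink
  have := card_memberSubfamily_add_card_shadow_le m G
  rw [hshadow, cascadeShadow_add_one]
  zify at this hGshadow
  linarith

lemma ShadowBound.of_pos
    (H : ∀ ⦃m n s t h : ℕ⦄ ⦃a : ℕ → ℤ⦄, t ≤ s + 1 → t ≤ h + 1 → IsCascade (h + 1) k a →
      F ⊆ EMIcc m n k (s + 1) t → cascadeSize (s + 1) t (h + 1) k a ≤ #F →
      cascadeShadow (s + 1) t (h + 1) k a ≤ #(∂ F)) :
    ShadowBound k F := by
  intro m n s t h a hts hth ha hF hM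
  -- with `t = 0` nothing depends on `s`, and index `0` only adds `C(a 0, 0) ≥ 0` to the size
  wlog hs : s ≠ 0 generalizing s
  · obtain rfl : s = 0 := not_not.1 hs
    obtain rfl : t = 0 := by omega
    have hsize : cascadeSize 0 0 h k a = cascadeSize 1 0 h k a := by simp [cascadeSize, cascadeTerm]
    have hshadow : cascadeShadow 0 0 h k a = cascadeShadow 1 0 h k a := by
      simp [cascadeShadow, cascadeTerm]
    have hEM : EMIcc m n k 0 0 = EMIcc m n k 1 0 := by simp [EMIcc]
    rw [hshadow]
    exact this zero_le_one (hEM ▸ hF) (hsize ▸ hM) one_ne_zero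
  wlog hh : h ≠ 0 generalizing h a
  · obtain rfl : h = 0 := not_not.1 hh
    obtain rfl : t = 0 := by omega
    have hsize : cascadeSize s 0 1 k a ≤ cascadeSize s 0 0 k a := by
      rw [cascadeSize_eq_add (Nat.zero_le k)]
      simpa [cascadeTerm] using ichoose_nonneg _ _
    rw [cascadeShadow_eq_add (Nat.zero_le k), cascadeTerm_of_neg (by norm_num), zero_add]
    exact this zero_le_one (ha.mono zero_le_one) (hsize.trans hM) one_ne_zero
  obtain ⟨s, rfl⟩ := Nat.exists_eq_succ_of_ne_zero hs
  obtain ⟨h, rfl⟩ := Nat.exists_eq_succ_of_ne_zero hh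
  exact H hts hth ha hF hM

theorem shadowBound : ∀ k F, ShadowBound k F
  | 0, F => fun _ _ _ _ _ _ _ _ _ _ _ => by
    rw [cascadeShadow, sum_eq_zero fun i hi => cascadeTerm_of_neg (by rw [mem_Icc] at hi; omega)]
    positivity
  | k + 1, F => ShadowBound.of_pos fun _ _ _ _ _ _ hts hth ha hF hM =>
    shadowBound_step (shadowBound k) (fun G _ => shadowBound (k + 1) G) hts hth ha hF hM
termination_by k F => (k, #F)

end shadowBound

theorem stmt2_general (n k s t h : ℕ) (a : ℕ → ℕ) (H : Finset (Finset ℕ))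
    (hts : t ≤ s) (hH : H ⊆ EM n k s t)
    (hh : max t 1 ≤ h) (hah : h ≤ a h) (hmono : StrictMonoOn a (Set.Icc h k))
    (hcard : (H.card : ℤ) = ∑ i ∈ Finset.Icc h k, ichoose (a i) i -
      ∑ j ∈ Finset.range t, ichoose s j *
        ∑ i ∈ Finset.Icc h k, ichoose ((a i : ℤ) - s) ((i : ℤ) - j)) :
    ((Finset.shadow H).card : ℤ) ≥ ∑ i ∈ Finset.Icc h k, ichoose (a i) ((i : ℤ) - 1) -
      ∑ j ∈ Finset.range (t - 1), ichoose s j *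
        ∑ i ∈ Finset.Icc h k, ichoose ((a i : ℤ) - s) ((i : ℤ) - 1 - j) := by
  have ha : IsCascade h k (fun i => (a i : ℤ)) :=
    isCascade_of_strictMonoOn (fun _ => by exact_mod_cast hah)
      fun i hi j hj hij => by exact_mod_cast hmono hi hj hij
  have hbound := shadowBound k H hts (le_of_max_le_left hh) ha (EM_eq_EMIcc n k s t ▸ hH)
    (by rw [cascadeSize_eq_sub, ← hcard])
  rwa [cascadeShadow_eq_sub] at hbound

theorem stmt2 (n k s t h : ℕ) (a : ℕ → ℕ) (H : Finset (Finset ℕ))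
    (hts : t ≤ s) (hH : H ⊆ EM n k s t)
    (hh : max t 1 ≤ h) (hhk : h ≤ k) (hah : h ≤ a h) (hmono : StrictMonoOn a (Set.Icc h k))
    (hcard : (H.card : ℤ) = ∑ i ∈ Finset.Icc h k, ichoose (a i) i -
      ∑ j ∈ Finset.range t, ichoose s j *
        ∑ i ∈ Finset.Icc h k, ichoose ((a i : ℤ) - s) ((i : ℤ) - j)) :
    ((Finset.shadow H).card : ℤ) ≥ ∑ i ∈ Finset.Icc h k, ichoose (a i) ((i : ℤ) - 1) -
      ∑ j ∈ Finset.range (t - 1), ichoose s j *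
        ∑ i ∈ Finset.Icc h k, ichoose ((a i : ℤ) - s) ((i : ℤ) - 1 - j) :=
  stmt2_general n k s t h a H hts hH hh hah hmono hcard
end

section
/- For any family H of k-subsets of [n], any 1 ≤ i < j ≤ n, and any 1 ≤ ℓ ≤ k−1, the ℓ-th shadow of the shifted family is contained in the shift of the ℓ-th shadow: ∂_ℓ S_{ij}(H) ⊆ S_{ij}(∂_ℓ H). In particular |∂_ℓ S_{ij}(H)| ≤ |∂_ℓ H|. -/
open Finset UV

/-- The `(i,j)`-shift of a set `A` with respect to the family `H`. -/
def shiftSet (i j : ℕ) (H : Finset (Finset ℕ)) (A : Finset ℕ) : Finset ℕ :=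
  if j ∈ A ∧ i ∉ A ∧ insert i (A.erase j) ∉ H then insert i (A.erase j) else A

/-- The `(i,j)`-shift of a family `H`. -/
def shiftFam (i j : ℕ) (H : Finset (Finset ℕ)) : Finset (Finset ℕ) :=
  H.image (shiftSet i j H)

lemma compress_eq (i j : ℕ) (hij : i ≠ j) (A : Finset ℕ) :
    UV.compress {i} {j} A = if j ∈ A ∧ i ∉ A then insert i (A.erase j) else A := by
  unfold UV.compress
  have : (Disjoint {i} A ∧ {j} ≤ A) ↔ (j ∈ A ∧ i ∉ A) := by
    simp [Finset.singleton_subset_iff, Finset.disjoint_singleton_left, and_comm]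
  rw [if_congr this rfl rfl]
  split_ifs with h
  · ext x
    simp only [Finset.mem_sdiff, Finset.mem_sup, Finset.sup_eq_union, Finset.mem_union,
      Finset.mem_singleton, Finset.mem_insert, Finset.mem_erase]
    constructor
    · rintro ⟨h1 | h1, h2⟩ <;> tauto
    · rintro (rfl | ⟨hx, hxA⟩) <;> constructor <;> tauto
  · rfl

lemma shiftFam_eq (i j : ℕ) (hij : i ≠ j) (H : Finset (Finset ℕ)) :
    shiftFam i j H = UV.compression {i} {j} H := by
  ext A
  simp only [shiftFam, Finset.mem_image, UV.mem_compression]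
  constructor
  · rintro ⟨B, hB, rfl⟩
    unfold shiftSet
    split_ifs with h
    · by_cases hmem : insert i (B.erase j) ∈ H
      · exact absurd hmem h.2.2
      · refine Or.inr ⟨hmem, B, hB, ?_⟩
        rw [compress_eq i j hij, if_pos ⟨h.1, h.2.1⟩]
    · refine Or.inl ⟨hB, ?_⟩
      rw [compress_eq i j hij]
      split_ifs with h'
      · by_contra hmem
        exact h ⟨h'.1, h'.2, hmem⟩
      · exact hB
  · rintro (⟨hA, hcA⟩ | ⟨hA, B, hB, rfl⟩)
    · refine ⟨A, hA, ?_⟩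
      unfold shiftSet
      rw [compress_eq i j hij] at hcA
      split_ifs with h
      · exact absurd (by rwa [if_pos ⟨h.1, h.2.1⟩] at hcA) h.2.2
      · rfl
    · refine ⟨B, hB, ?_⟩
      rw [compress_eq i j hij] at hA ⊢
      by_cases h' : j ∈ B ∧ i ∉ B
      · rw [if_pos h'] at hA ⊢
        unfold shiftSet
        rw [if_pos ⟨h'.1, h'.2, hA⟩]
      · rw [if_neg h'] at hA
        exact absurd hB hA

theorem stmt8 (n k i j ℓ : ℕ) (H : Finset (Finset ℕ))
    (hH : H ⊆ (Finset.Icc 1 n).powersetCard k)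
    (hi : 1 ≤ i) (hij : i < j) (hj : j ≤ n) (hℓ1 : 1 ≤ ℓ) (hℓk : ℓ ≤ k - 1) :
    Finset.shadow^[ℓ] (shiftFam i j H) ⊆ shiftFam i j (Finset.shadow^[ℓ] H) ∧
    (Finset.shadow^[ℓ] (shiftFam i j H)).card ≤ (Finset.shadow^[ℓ] H).card := by
  have hne : i ≠ j := hij.ne
  have key : ∀ (G : Finset (Finset ℕ)), (shiftFam i j G).shadow ⊆ shiftFam i j G.shadow := by
    intro G
    rw [shiftFam_eq i j hne, shiftFam_eq i j hne]
    apply UV.shadow_compression_subset_compression_shadow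
    intro x hx
    simp only [Finset.mem_singleton] at hx
    subst hx
    exact ⟨j, Finset.mem_singleton_self j, by simp [UV.isCompressed_self]⟩
  have sub : ∀ m, Finset.shadow^[m] (shiftFam i j H) ⊆ shiftFam i j (Finset.shadow^[m] H) := by
    intro m
    induction m with
    | zero => simp
    | succ m ih =>
      rw [Function.iterate_succ_apply', Function.iterate_succ_apply']
      exact (Finset.shadow_monotone ih).trans (key _)
  refine ⟨sub ℓ, ?_⟩
  calc (Finset.shadow^[ℓ] (shiftFam i j H)).card
      ≤ (shiftFam i j (Finset.shadow^[ℓ] H)).card := Finset.card_le_card (sub ℓ)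
    _ ≤ (Finset.shadow^[ℓ] H).card := Finset.card_image_le
end

section
/- For any family H of k-subsets of [n] and 1 ≤ i < j ≤ n, the matching number does not increase under shifting: ν(S_{ij}(H)) ≤ ν(H). -/
open scoped Classical in
/-- The matching number of a family: the maximum number of pairwise disjoint edges. -/
noncomputable def matchingNumber (H : Finset (Finset ℕ)) : ℕ :=
  (H.powerset.filter fun M : Finset (Finset ℕ) => Set.PairwiseDisjoint (M : Set (Finset ℕ)) (id : Finset ℕ → Finset ℕ)).sup Finset.card

open scoped Classical in
lemma le_matchingNumber_of (H M : Finset (Finset ℕ)) (hsub : M ⊆ H)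
    (hd : Set.PairwiseDisjoint (M : Set (Finset ℕ)) (id : Finset ℕ → Finset ℕ)) :
    M.card ≤ matchingNumber H := by
  apply Finset.le_sup (f := Finset.card)
  rw [Finset.mem_filter, Finset.mem_powerset]
  exact ⟨hsub, hd⟩

theorem stmt9 (n k i j : ℕ) (H : Finset (Finset ℕ))
    (hH : H ⊆ (Finset.Icc 1 n).powersetCard k)
    (hi : 1 ≤ i) (hij : i < j) (hj : j ≤ n) :
    matchingNumber (shiftFam i j H) ≤ matchingNumber H := by
  classical
  unfold matchingNumber
  apply Finset.sup_le
  intro M hM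
  rw [Finset.mem_filter, Finset.mem_powerset] at hM
  obtain ⟨hMsub, hMdisj⟩ := hM
  suffices h : ∃ M' : Finset (Finset ℕ), M' ⊆ H ∧
      Set.PairwiseDisjoint (M' : Set (Finset ℕ)) (id : Finset ℕ → Finset ℕ) ∧
      M.card ≤ M'.card by
    obtain ⟨M', hsub, hd, hc⟩ := h
    calc M.card ≤ M'.card := hc
    _ ≤ _ := le_matchingNumber_of H M' hsub hd
  by_cases hall : ∀ B ∈ M, B ∈ H
  · exact ⟨M, hall, hMdisj, le_rfl⟩
  push_neg at hall
  obtain ⟨B, hBM, hBH⟩ := hall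
  obtain ⟨A₀, hA₀H, hA₀B⟩ := Finset.mem_image.1 (hMsub hBM)
  unfold shiftSet at hA₀B
  by_cases hcond : j ∈ A₀ ∧ i ∉ A₀ ∧ insert i (A₀.erase j) ∉ H
  swap
  · rw [if_neg hcond] at hA₀B
    exact absurd (hA₀B ▸ hA₀H) hBH
  rw [if_pos hcond] at hA₀B
  obtain ⟨hjA₀, hiA₀, -⟩ := hcond
  have hiB : i ∈ B := hA₀B ▸ Finset.mem_insert_self i _
  have hjB : j ∉ B := by
    subst hA₀B
    simp [Finset.mem_insert, hij.ne']
  set A : Finset ℕ := insert j (B.erase i) with hAdef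
  have hAA₀ : A = A₀ := by
    rw [hAdef]
    subst hA₀B
    rw [Finset.erase_insert (by simp [hiA₀])]
    exact Finset.insert_erase hjA₀
  have hAH : A ∈ H := hAA₀ ▸ hA₀H
  have hjA : j ∈ A := Finset.mem_insert_self _ _
  have hiA : i ∉ A := by simp [hAdef, hij.ne]
  have hASub : A ⊆ insert j B :=
    Finset.insert_subset_insert _ (Finset.erase_subset _ _)
  -- every other member of M is in H and avoids i
  have hother : ∀ B' ∈ M, B' ≠ B → B' ∈ H ∧ i ∉ B' := by
    intro B' hB'M hne
    have hiB' : i ∉ B' := fun hi' =>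
      Finset.disjoint_left.1 (hMdisj (Finset.mem_coe.2 hB'M) (Finset.mem_coe.2 hBM) hne) hi' hiB
    obtain ⟨A', hA'H, hA'B⟩ := Finset.mem_image.1 (hMsub hB'M)
    unfold shiftSet at hA'B
    split_ifs at hA'B with hc
    · exact absurd (hA'B ▸ Finset.mem_insert_self i _) hiB'
    · exact ⟨hA'B ▸ hA'H, hiB'⟩
  by_cases hjex : ∃ B' ∈ M, B' ≠ B ∧ j ∈ B'
  · -- some other member contains j : swap both
    obtain ⟨B', hB'M, hB'ne, hjB'⟩ := hjex
    obtain ⟨hB'H, hiB'⟩ := hother B' hB'M hB'ne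
    -- C := insert i (B'.erase j) is in H, else B' would not be a fixed point image
    obtain ⟨A', hA'H, hA'B⟩ := Finset.mem_image.1 (hMsub hB'M)
    have hCH : insert i (B'.erase j) ∈ H := by
      by_contra hC
      unfold shiftSet at hA'B
      split_ifs at hA'B with hc
      · exact hiB' (hA'B ▸ Finset.mem_insert_self i _)
      · subst hA'B
        exact hc ⟨hjB', hiB', hC⟩
    set C : Finset ℕ := insert i (B'.erase j) with hCdef
    have hiC : i ∈ C := Finset.mem_insert_self _ _
    have hjC : j ∉ C := by simp [hCdef, hij.ne']
    have hCSub : C ⊆ insert i B' :=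
      Finset.insert_subset_insert _ (Finset.erase_subset _ _)
    set M₀ : Finset (Finset ℕ) := (M.erase B).erase B' with hM₀
    have hM₀mem : ∀ x ∈ M₀, x ∈ M ∧ x ≠ B ∧ x ≠ B' := by
      intro x hx
      rw [hM₀, Finset.mem_erase, Finset.mem_erase] at hx
      exact ⟨hx.2.2, hx.2.1, hx.1⟩
    have hjx : ∀ x ∈ M₀, j ∉ x := by
      intro x hx hjx
      obtain ⟨hxM, hxB, hxB'⟩ := hM₀mem x hx
      exact Finset.disjoint_left.1
        (hMdisj (Finset.mem_coe.2 hxM) (Finset.mem_coe.2 hB'M) hxB') hjx hjB'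
    have hix : ∀ x ∈ M₀, i ∉ x := fun x hx => (hother x (hM₀mem x hx).1 (hM₀mem x hx).2.1).2
    have hdisjBx : ∀ x ∈ M₀, Disjoint B x := fun x hx =>
      hMdisj (Finset.mem_coe.2 hBM) (Finset.mem_coe.2 (hM₀mem x hx).1) (Ne.symm (hM₀mem x hx).2.1)
    have hdisjB'x : ∀ x ∈ M₀, Disjoint B' x := fun x hx =>
      hMdisj (Finset.mem_coe.2 hB'M) (Finset.mem_coe.2 (hM₀mem x hx).1) (Ne.symm (hM₀mem x hx).2.2)
    have hAx : ∀ x ∈ M₀, Disjoint A x := by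
      intro x hx
      refine Finset.disjoint_left.2 fun {a} ha hax => ?_
      rcases Finset.mem_insert.1 (hASub ha) with rfl | haB
      · exact hjx x hx hax
      · exact Finset.disjoint_left.1 (hdisjBx x hx) haB hax
    have hCx : ∀ x ∈ M₀, Disjoint C x := by
      intro x hx
      refine Finset.disjoint_left.2 fun {a} ha hax => ?_
      rcases Finset.mem_insert.1 (hCSub ha) with rfl | haB'
      · exact hix x hx hax
      · exact Finset.disjoint_left.1 (hdisjB'x x hx) haB' hax
    have hAC : Disjoint A C := by
      refine Finset.disjoint_left.2 fun {a} ha hac => ?_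
      rw [hAdef] at ha
      rw [hCdef] at hac
      rcases Finset.mem_insert.1 hac with rfl | haC
      · exact hiA (hAdef ▸ ha)
      · rcases Finset.mem_insert.1 ha with rfl | haA
        · exact (Finset.mem_erase.1 haC).1 rfl
        · exact Finset.disjoint_left.1
            (hMdisj (Finset.mem_coe.2 hBM) (Finset.mem_coe.2 hB'M) (Ne.symm hB'ne))
            (Finset.mem_of_mem_erase haA) (Finset.mem_of_mem_erase haC)
    have hANe : A ∉ insert C M₀ := by
      intro hmem
      rcases Finset.mem_insert.1 hmem with h | hA'
      · exact hjC (h ▸ hjA)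
      · exact hjx A hA' hjA
    have hCNe : C ∉ M₀ := fun hC' => hix C hC' hiC
    refine ⟨insert A (insert C M₀), ?_, ?_, ?_⟩
    · intro x hx
      rcases Finset.mem_insert.1 hx with rfl | hx
      · exact hAH
      rcases Finset.mem_insert.1 hx with rfl | hx
      · exact hCH
      · exact (hother x (hM₀mem x hx).1 (hM₀mem x hx).2.1).1
    · rw [Finset.coe_insert, Finset.coe_insert]
      have hM₀d : Set.PairwiseDisjoint (M₀ : Set (Finset ℕ)) (id : Finset ℕ → Finset ℕ) :=
        hMdisj.subset (by intro x hx; exact Finset.mem_coe.2 (hM₀mem x (Finset.mem_coe.1 hx)).1)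
      have hCd : Set.PairwiseDisjoint (insert C (M₀ : Set (Finset ℕ))) (id : Finset ℕ → Finset ℕ) :=
        hM₀d.insert fun x hx _ => hCx x (Finset.mem_coe.1 hx)
      refine hCd.insert fun x hx hne => ?_
      rcases hx with rfl | hx
      · exact hAC
      · exact hAx x (Finset.mem_coe.1 hx)
    · have hB'Me : B' ∈ M.erase B := Finset.mem_erase.2 ⟨hB'ne, hB'M⟩
      have h2 : 2 ≤ M.card := Finset.one_lt_card.2 ⟨B, hBM, B', hB'M, Ne.symm hB'ne⟩
      rw [Finset.card_insert_of_notMem hANe, Finset.card_insert_of_notMem hCNe,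
        hM₀, Finset.card_erase_of_mem hB'Me, Finset.card_erase_of_mem hBM]
      omega
  · -- no other member contains j : swap just B
    push_neg at hjex
    have hANe : A ∉ M.erase B := by
      intro hmem
      obtain ⟨hne, hAM⟩ := Finset.mem_erase.1 hmem
      exact hjex A hAM hne hjA
    refine ⟨insert A (M.erase B), ?_, ?_, ?_⟩
    · intro x hx
      rcases Finset.mem_insert.1 hx with rfl | hx
      · exact hAH
      · obtain ⟨hne, hxM⟩ := Finset.mem_erase.1 hx
        exact (hother x hxM hne).1
    · rw [Finset.coe_insert]
      have hMe : Set.PairwiseDisjoint ((M.erase B : Finset (Finset ℕ)) : Set (Finset ℕ))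
          (id : Finset ℕ → Finset ℕ) :=
        hMdisj.subset (by intro x hx; exact Finset.mem_coe.2 (Finset.mem_erase.1 (Finset.mem_coe.1 hx)).2)
      refine hMe.insert fun x hx _ => ?_
      obtain ⟨hne, hxM⟩ := Finset.mem_erase.1 (Finset.mem_coe.1 hx)
      refine Finset.disjoint_left.2 fun {a} ha hax => ?_
      rcases Finset.mem_insert.1 (hASub ha) with rfl | haB
      · exact hjex x hxM hne hax
      · exact Finset.disjoint_left.1
          (hMdisj (Finset.mem_coe.2 hBM) (Finset.mem_coe.2 hxM) (Ne.symm hne)) haB hax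
    · rw [Finset.card_insert_of_notMem hANe, Finset.card_erase_of_mem hBM]
      have h1 : 1 ≤ M.card := Finset.card_pos.2 ⟨B, hBM⟩
      omega
end

section
/- If H is a t-intersecting family of k-subsets of [n] and 1 ≤ i < j ≤ n, then S_{ij}(H) is also t-intersecting. -/
/-- The mixed case: `A` is shifted, `B` is not. -/
lemma shift_mixed (i j t : ℕ) (H : Finset (Finset ℕ))
    (hint : ∀ A ∈ H, ∀ B ∈ H, t ≤ (A ∩ B).card)
    (A : Finset ℕ) (hA : A ∈ H) (B : Finset ℕ) (hB : B ∈ H)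
    (h : j ∈ A ∧ i ∉ A ∧ insert i (A.erase j) ∉ H)
    (hb : ¬(j ∈ B ∧ i ∉ B ∧ insert i (B.erase j) ∉ H)) :
    t ≤ ((insert i (A.erase j)) ∩ B).card := by
  obtain ⟨hjA, hiA, -⟩ := h
  by_cases hjB : j ∈ B
  · by_cases hiB : i ∈ B
    · -- i ∈ B : the intersection is `insert i ((A∩B).erase j)`
      have hset : (insert i (A.erase j)) ∩ B = insert i ((A ∩ B).erase j) := by
        ext x
        simp only [Finset.mem_inter, Finset.mem_insert, Finset.mem_erase]
        constructor
        · rintro ⟨(rfl | ⟨hx, hxA⟩), hxB⟩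
          · exact Or.inl rfl
          · exact Or.inr ⟨hx, hxA, hxB⟩
        · rintro (rfl | ⟨hx, hxA, hxB⟩)
          · exact ⟨Or.inl rfl, hiB⟩
          · exact ⟨Or.inr ⟨hx, hxA⟩, hxB⟩
      have hiAB : i ∉ (A ∩ B).erase j := fun hx =>
        hiA (Finset.mem_of_mem_inter_left (Finset.mem_of_mem_erase hx))
      have hjAB : j ∈ A ∩ B := Finset.mem_inter.2 ⟨hjA, hjB⟩
      have h1 : 1 ≤ (A ∩ B).card := Finset.card_pos.2 ⟨j, hjAB⟩
      have := hint A hA B hB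
      rw [hset, Finset.card_insert_of_notMem hiAB, Finset.card_erase_of_mem hjAB]
      omega
    · -- j ∈ B, i ∉ B : then `insert i (B.erase j) ∈ H`
      push_neg at hb
      have hC : insert i (B.erase j) ∈ H := hb hjB hiB
      have hset : (insert i (A.erase j)) ∩ B = A ∩ insert i (B.erase j) := by
        ext x
        simp only [Finset.mem_inter, Finset.mem_insert, Finset.mem_erase]
        constructor
        · rintro ⟨(rfl | ⟨hx, hxA⟩), hxB⟩
          · exact absurd hxB hiB
          · exact ⟨hxA, Or.inr ⟨hx, hxB⟩⟩
        · rintro ⟨hxA, (rfl | ⟨hx, hxB⟩)⟩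
          · exact absurd hxA hiA
          · exact ⟨Or.inr ⟨hx, hxA⟩, hxB⟩
      rw [hset]
      exact hint A hA _ hC
  · -- j ∉ B : `A ∩ B ⊆ (insert i (A.erase j)) ∩ B`
    have hsub : A ∩ B ⊆ (insert i (A.erase j)) ∩ B := by
      intro x hx
      rw [Finset.mem_inter] at hx ⊢
      refine ⟨Finset.mem_insert.2 (Or.inr (Finset.mem_erase.2 ⟨?_, hx.1⟩)), hx.2⟩
      rintro rfl; exact hjB hx.2
    exact le_trans (hint A hA B hB) (Finset.card_le_card hsub)

theorem stmt10 (n k t i j : ℕ) (H : Finset (Finset ℕ))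
    (hH : H ⊆ (Finset.Icc 1 n).powersetCard k)
    (hint : ∀ A ∈ H, ∀ B ∈ H, t ≤ (A ∩ B).card)
    (hi : 1 ≤ i) (hij : i < j) (hj : j ≤ n) :
    ∀ A ∈ shiftFam i j H, ∀ B ∈ shiftFam i j H, t ≤ (A ∩ B).card := by
  intro A' hA' B' hB'
  obtain ⟨A, hA, rfl⟩ := Finset.mem_image.1 hA'
  obtain ⟨B, hB, rfl⟩ := Finset.mem_image.1 hB'
  by_cases hA1 : j ∈ A ∧ i ∉ A ∧ insert i (A.erase j) ∉ H <;>
  by_cases hB1 : j ∈ B ∧ i ∉ B ∧ insert i (B.erase j) ∉ H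
  · -- both shifted
    rw [shiftSet, if_pos hA1, shiftSet, if_pos hB1]
    obtain ⟨hjA, hiA, -⟩ := hA1
    obtain ⟨hjB, hiB, -⟩ := hB1
    have hset : insert i (A.erase j) ∩ insert i (B.erase j)
        = insert i ((A ∩ B).erase j) := by
      ext x
      simp only [Finset.mem_inter, Finset.mem_insert, Finset.mem_erase]
      tauto
    have hiAB : i ∉ (A ∩ B).erase j := fun hx =>
      hiA (Finset.mem_of_mem_inter_left (Finset.mem_of_mem_erase hx))
    have hjAB : j ∈ A ∩ B := Finset.mem_inter.2 ⟨hjA, hjB⟩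
    have h1 : 1 ≤ (A ∩ B).card := Finset.card_pos.2 ⟨j, hjAB⟩
    have := hint A hA B hB
    rw [hset, Finset.card_insert_of_notMem hiAB, Finset.card_erase_of_mem hjAB]
    omega
  · rw [shiftSet, if_pos hA1, shiftSet, if_neg hB1]
    exact shift_mixed i j t H hint A hA B hB hA1 hB1
  · rw [shiftSet, if_neg hA1, shiftSet, if_pos hB1, Finset.inter_comm]
    exact shift_mixed i j t H hint B hB A hA hB1 hA1
  · rw [shiftSet, if_neg hA1, shiftSet, if_neg hB1]
    exact hint A hA B hB
end

section
/- Let t ≥ 1, k ≥ 2t+2, and let ℓ satisfy 1 ≤ ℓ < t. Then for sufficiently large n, with m = |EM(n,k,t+2,t+1)|, the ℓ-th shadow of EM(n,k,t+2,t+1) is strictly smaller than the ℓ-th shadow of the first m sets of EM(n,k,t,t) in colex order: |∂_ℓ EM(n,k,t+2,t+1)| < |∂_ℓ L_m EM(n,k,t,t)|. -/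
/-- `IsInitSeg F G m` : `G` consists of the first `m` elements of `F` in colex order. -/
def IsInitSeg (F G : Finset (Finset ℕ)) (m : ℕ) : Prop :=
  G ⊆ F ∧ G.card = m ∧
    ∀ A ∈ G, ∀ B ∈ F, toColex B ≤ toColex A → B ∈ G

/-!
Every member of `G` contains `[t]`, and deleting `ℓ` points of `[t]` from distinct members gives
distinct sets, so `|∂_ℓ G| ≥ C(t,ℓ)·m`; counting the sets that meet `[t+2]` in exactly `t+1`
points, `m ≥ (t+2)·C(n-t-2, k-t-1)`. On the other side `∂_ℓ EM(n,k,t+2,t+1)` lies in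
`EM(n,k-ℓ,t+2,t+1-ℓ)`, and splitting that family by `|B ∩ [t+2]|` bounds its size by
`C(t+2,ℓ+1)·C(n-t-2,k-t-1) + 2^(t+2)·C(n-t-2,k-t-2)`. The second term is negligible for large
`n`, and `C(t+2,ℓ+1) < (t+2)·C(t,ℓ)` when `1 ≤ ℓ < t`.
-/

open Finset
open scoped FinsetFamily

namespace Nat

theorem choose_le_choose_of_le_of_two_mul_le {n a b : ℕ} (hab : a ≤ b) (hb : 2 * b ≤ n) :
    n.choose a ≤ n.choose b := by
  induction b, hab using Nat.le_induction with
  | base => rfl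
  | succ b _ ih => exact (ih (by omega)).trans (choose_le_succ_of_lt_half_left (by omega))

theorem mul_choose_lt_choose_succ {n r a : ℕ} (h : a * (r + 1) < n - r) :
    a * n.choose r < n.choose (r + 1) := by
  have hpos : 0 < n.choose r := choose_pos (by omega)
  refine Nat.lt_of_mul_lt_mul_right (a := r + 1) ?_
  calc a * n.choose r * (r + 1) = n.choose r * (a * (r + 1)) := by ring
    _ < n.choose r * (n - r) := Nat.mul_lt_mul_of_pos_left h hpos
    _ = n.choose (r + 1) * (r + 1) := (choose_succ_right_eq n r).symm

/-- The ratio of the two sides is `(t+1) / ((ℓ+1)(t+1-ℓ))`, and `(ℓ+1)(t+1-ℓ) = t+1 + ℓ(t-ℓ)`. -/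
theorem choose_add_two_succ_lt_mul_choose {t ℓ : ℕ} (hℓ : 1 ≤ ℓ) (hℓt : ℓ < t) :
    (t + 2).choose (ℓ + 1) < (t + 2) * t.choose ℓ := by
  obtain ⟨a, rfl⟩ : ∃ a, t = ℓ + a + 1 := ⟨t - ℓ - 1, by omega⟩
  have h₁ := add_one_mul_choose_eq (ℓ + a + 2) ℓ
  have h₂ := choose_mul_succ_eq (ℓ + a + 1) ℓ
  have hpos : 0 < (ℓ + a + 1).choose ℓ := choose_pos (by omega)
  rw [show ℓ + a + 1 + 1 - ℓ = a + 2 by omega] at h₂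
  refine Nat.lt_of_mul_lt_mul_right (a := (ℓ + 1) * (a + 2)) ?_
  calc (ℓ + a + 1 + 2).choose (ℓ + 1) * ((ℓ + 1) * (a + 2))
      = (ℓ + a + 3) * ((ℓ + a + 1).choose ℓ * (ℓ + a + 2)) := by
        rw [h₂, show ℓ + a + 1 + 2 = ℓ + a + 2 + 1 by ring, ← mul_assoc, ← h₁]; ring
    _ < (ℓ + a + 3) * ((ℓ + a + 1).choose ℓ * ((ℓ + 1) * (a + 2))) := by
        gcongr; nlinarith
    _ = (ℓ + a + 1 + 2) * (ℓ + a + 1).choose ℓ * ((ℓ + 1) * (a + 2)) := by ring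

end Nat

namespace Finset

theorem card_mul_choose_le_card_shadow_iterate {α : Type*} [DecidableEq α]
    {𝒜 : Finset (Finset α)} {S : Finset α} (h𝒜 : ∀ A ∈ 𝒜, S ⊆ A) (ℓ : ℕ) :
    #𝒜 * (#S).choose ℓ ≤ #(∂^[ℓ] 𝒜) := by
  rw [← card_powersetCard, ← card_product]
  refine card_le_card_of_injOn (fun p => p.1 \ p.2) ?_ ?_
  · rintro ⟨A, R⟩ hAR
    simp only [coe_product, Set.mem_prod, mem_coe, mem_powersetCard] at hAR
    obtain ⟨hA, hRS, hR⟩ := hAR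
    rw [mem_coe, mem_shadow_iterate_iff_exists_sdiff]
    refine ⟨A, hA, sdiff_subset, ?_⟩
    rw [sdiff_sdiff_right_self, inf_eq_inter, inter_eq_right.2 (hRS.trans (h𝒜 A hA)), hR]
  · rintro ⟨A, R⟩ hAR ⟨A', R'⟩ hAR' heq
    simp only [coe_product, Set.mem_prod, mem_coe, mem_powersetCard] at hAR hAR' heq
    have recover : ∀ {A R : Finset α}, R ⊆ S → S ⊆ A → S \ (A \ R) = R ∧ A \ R ∪ R = A :=
      fun hRS hSA => ⟨by ext x; have := @hRS x; have := @hSA x; simp only [mem_sdiff]; tauto,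
        sdiff_union_of_subset (hRS.trans hSA)⟩
    obtain ⟨hR, hA⟩ := recover hAR.2.1 (h𝒜 A hAR.1)
    obtain ⟨hR', hA'⟩ := recover hAR'.2.1 (h𝒜 A' hAR'.1)
    have hRR : R = R' := by rw [← hR, ← hR', heq]
    rw [← hA, ← hA', heq, hRR]

theorem card_filter_card_inter_eq {α : Type*} [DecidableEq α] {X Y : Finset α}
    (hXY : Disjoint X Y) (i j : ℕ) :
    #{B ∈ (X ∪ Y).powersetCard (i + j) | #(B ∩ X) = i} = (#X).choose i * (#Y).choose j := by
  rw [← card_powersetCard, ← card_powersetCard, ← card_product]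
  refine card_nbij' (fun B => (B ∩ X, B ∩ Y)) (fun p => p.1 ∪ p.2) ?_ ?_ ?_ ?_
  · intro B hB
    simp only [mem_coe, mem_filter, mem_powersetCard] at hB
    obtain ⟨⟨hBXY, hB⟩, hBX⟩ := hB
    have : #(B ∩ X) + #(B ∩ Y) = i + j := by
      rw [← card_union_of_disjoint (hXY.mono inter_subset_right inter_subset_right),
        ← inter_union_distrib_left, inter_eq_left.2 hBXY, hB]
    simp only [coe_product, Set.mem_prod, mem_coe, mem_powersetCard]
    exact ⟨⟨inter_subset_right, hBX⟩, inter_subset_right, by omega⟩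
  · rintro ⟨P, Q⟩ hPQ
    simp only [coe_product, Set.mem_prod, mem_coe, mem_powersetCard] at hPQ
    obtain ⟨⟨hPX, hP⟩, hQY, hQ⟩ := hPQ
    have hPQ : Disjoint P Q := hXY.mono hPX hQY
    simp only [mem_coe, mem_filter, mem_powersetCard]
    refine ⟨⟨union_subset_union hPX hQY, by rw [card_union_of_disjoint hPQ, hP, hQ]⟩, ?_⟩
    rw [union_inter_distrib_right, inter_eq_left.2 hPX,
      disjoint_iff_inter_eq_empty.1 (hXY.symm.mono_left hQY), union_empty, hP]
  · intro B hB
    simp only [mem_coe, mem_filter, mem_powersetCard] at hB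
    change B ∩ X ∪ B ∩ Y = B
    rw [← inter_union_distrib_left, inter_eq_left.2 hB.1.1]
  · rintro ⟨P, Q⟩ hPQ
    simp only [coe_product, Set.mem_prod, mem_coe, mem_powersetCard] at hPQ
    obtain ⟨⟨hPX, -⟩, hQY, -⟩ := hPQ
    simp only [union_inter_distrib_right, inter_eq_left.2 hPX, inter_eq_left.2 hQY,
      disjoint_iff_inter_eq_empty.1 (hXY.mono_left hPX),
      disjoint_iff_inter_eq_empty.1 (hXY.symm.mono_left hQY), union_empty, empty_union]

end Finset

section EM

variable {n k s c : ℕ}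

theorem Icc_subset_of_mem_EM {A : Finset ℕ} (hA : A ∈ EM n k s s) : Icc 1 s ⊆ A := by
  simp only [EM, mem_filter] at hA
  have hAs : A ∩ Icc 1 s = Icc 1 s :=
    eq_of_subset_of_card_le inter_subset_right (by simpa using hA.2)
  exact inter_eq_right.1 hAs

theorem shadow_iterate_EM_subset (ℓ : ℕ) : ∂^[ℓ] (EM n k s c) ⊆ EM n (k - ℓ) s (c - ℓ) := by
  intro B hB
  obtain ⟨A, hA, hBA, hAB⟩ := mem_shadow_iterate_iff_exists_sdiff.1 hB
  simp only [EM, mem_filter, mem_powersetCard] at hA ⊢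
  obtain ⟨⟨hAn, hAk⟩, hAc⟩ := hA
  have hinter : A ∩ Icc 1 s ⊆ B ∩ Icc 1 s ∪ A \ B := by
    intro x hx
    by_cases hxB : x ∈ B <;> simp_all
  have := (card_le_card hinter).trans (card_union_le _ _)
  have := card_sdiff_add_card_eq_card hBA
  exact ⟨⟨hBA.trans hAn, by omega⟩, by omega⟩

theorem card_filter_card_inter_Icc_eq {j : ℕ} (hsn : s ≤ n) (hjk : j ≤ k) :
    #{A ∈ (Icc 1 n).powersetCard k | #(A ∩ Icc 1 s) = j} = s.choose j * (n - s).choose (k - j) := by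
  have hunion : Icc 1 s ∪ Ioc s n = Icc 1 n := by
    ext x; simp only [mem_union, mem_Icc, mem_Ioc]; omega
  have hdisj : Disjoint (Icc 1 s) (Ioc s n) := by
    rw [disjoint_left]; intro x hx hx'; simp only [mem_Icc, mem_Ioc] at hx hx'; omega
  have := card_filter_card_inter_eq hdisj j (k - j)
  rwa [hunion, Nat.add_sub_cancel' hjk, Nat.card_Icc, Nat.card_Ioc, Nat.add_sub_cancel] at this

theorem card_EM_eq_sum (hsn : s ≤ n) :
    #(EM n k s c) = ∑ j ∈ Icc c k, s.choose j * (n - s).choose (k - j) := by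
  rw [card_eq_sum_card_fiberwise (f := fun A => #(A ∩ Icc 1 s)) (t := Icc c k)]
  · refine sum_congr rfl fun j hj => ?_
    rw [mem_Icc] at hj
    rw [← card_filter_card_inter_Icc_eq hsn hj.2, EM, filter_filter]
    exact congrArg card (filter_congr fun A _ => ⟨And.right, fun h => ⟨h ▸ hj.1, h⟩⟩)
  · intro A hA
    simp only [EM, mem_coe, mem_filter, mem_powersetCard] at hA
    simp only [coe_Icc, Set.mem_Icc]
    exact ⟨hA.2, hA.1.2 ▸ card_le_card inter_subset_left⟩

theorem choose_mul_choose_le_card_EM (hsn : s ≤ n) (hck : c ≤ k) :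
    s.choose c * (n - s).choose (k - c) ≤ #(EM n k s c) := by
  rw [card_EM_eq_sum hsn]
  exact single_le_sum (f := fun j => s.choose j * (n - s).choose (k - j)) (fun _ _ => Nat.zero_le _)
    (mem_Icc.2 ⟨le_rfl, hck⟩)

theorem card_EM_le {q : ℕ} (hsn : s ≤ n) (hq : 2 * q ≤ n - s) :
    #(EM n (c + q + 1) s c) ≤ s.choose c * (n - s).choose (q + 1) + 2 ^ s * (n - s).choose q := by
  rw [card_EM_eq_sum hsn, ← Ioc_insert_left (by omega), sum_insert left_notMem_Ioc,
    show c + q + 1 - c = q + 1 by omega]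
  gcongr
  calc ∑ j ∈ Ioc c (c + q + 1), s.choose j * (n - s).choose (c + q + 1 - j)
      ≤ ∑ j ∈ Ioc c (c + q + 1), s.choose j * (n - s).choose q := by
        gcongr with j hj
        rw [mem_Ioc] at hj
        exact Nat.choose_le_choose_of_le_of_two_mul_le (by omega) hq
    _ ≤ ∑ j ∈ range (s + 1), s.choose j * (n - s).choose q := by
        refine sum_le_sum_of_ne_zero fun j _ hj => ?_
        rw [mem_range, Nat.lt_succ_iff]
        by_contra! hsj
        exact hj (by rw [Nat.choose_eq_zero_of_lt hsj, zero_mul])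
    _ = 2 ^ s * (n - s).choose q := by rw [← sum_mul, Nat.sum_range_choose]

end EM

theorem stmt13_general (k t ℓ : ℕ) (hk : 2 * t + 2 ≤ k) (hℓ1 : 1 ≤ ℓ) (hℓt : ℓ < t) :
    ∃ N : ℕ, ∀ n ≥ N, ∀ G : Finset (Finset ℕ),
      IsInitSeg (EM n k t t) G (EM n k (t + 2) (t + 1)).card →
      (Finset.shadow^[ℓ] (EM n k (t + 2) (t + 1))).card < (Finset.shadow^[ℓ] G).card := by
  refine ⟨2 ^ (t + 2) * k + 2 * k + t + 3, fun n hn G hG => ?_⟩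
  obtain ⟨hGsub, hGcard, -⟩ := hG
  obtain ⟨q, rfl⟩ : ∃ q, k = t + 1 + q + 1 := ⟨k - t - 2, by omega⟩
  set M := n - (t + 2)
  have hMq : 2 ^ (t + 2) * (q + 1) < M - q := by
    have : 2 ^ (t + 2) * (q + 1) ≤ 2 ^ (t + 2) * (t + 1 + q + 1) := Nat.mul_le_mul_left _ (by omega)
    omega
  have hshadowG : #(EM n (t + 1 + q + 1) (t + 2) (t + 1)) * t.choose ℓ ≤ #(∂^[ℓ] G) := by
    simpa [← hGcard] using
      card_mul_choose_le_card_shadow_iterate (fun A hA => Icc_subset_of_mem_EM (hGsub hA)) ℓ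
  have hEM : (t + 2) * M.choose (q + 1) ≤ #(EM n (t + 1 + q + 1) (t + 2) (t + 1)) := by
    have h := choose_mul_choose_le_card_EM (n := n) (k := t + 1 + q + 1) (s := t + 2) (c := t + 1)
      (by omega) (by omega)
    rwa [Nat.choose_succ_self_right, show t + 1 + q + 1 - (t + 1) = q + 1 by omega] at h
  have hshadowEM : #(∂^[ℓ] (EM n (t + 1 + q + 1) (t + 2) (t + 1))) ≤
      (t + 2).choose (ℓ + 1) * M.choose (q + 1) + 2 ^ (t + 2) * M.choose q := by
    calc _ ≤ #(EM n (t + 1 - ℓ + q + 1) (t + 2) (t + 1 - ℓ)) := by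
          rw [show t + 1 - ℓ + q + 1 = t + 1 + q + 1 - ℓ by omega]
          exact card_le_card (shadow_iterate_EM_subset ℓ)
      _ ≤ (t + 2).choose (t + 1 - ℓ) * M.choose (q + 1) + 2 ^ (t + 2) * M.choose q :=
          card_EM_le (by omega) (by omega)
      _ = _ := by rw [Nat.choose_symm_of_eq_add (show t + 2 = t + 1 - ℓ + (ℓ + 1) by omega)]
  calc #(∂^[ℓ] (EM n (t + 1 + q + 1) (t + 2) (t + 1)))
      < ((t + 2).choose (ℓ + 1) + 1) * M.choose (q + 1) := by
        rw [add_one_mul]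
        exact hshadowEM.trans_lt (Nat.add_lt_add_left (Nat.mul_choose_lt_choose_succ hMq) _)
    _ ≤ (t + 2) * t.choose ℓ * M.choose (q + 1) :=
        Nat.mul_le_mul_right _ (Nat.choose_add_two_succ_lt_mul_choose hℓ1 hℓt)
    _ = (t + 2) * M.choose (q + 1) * t.choose ℓ := by ring
    _ ≤ #(∂^[ℓ] G) := (Nat.mul_le_mul_right _ hEM).trans hshadowG

theorem stmt13 (k t ℓ : ℕ) (ht : 1 ≤ t) (hk : 2 * t + 2 ≤ k) (hℓ1 : 1 ≤ ℓ) (hℓt : ℓ < t) :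
    ∃ N : ℕ, ∀ n ≥ N, ∀ G : Finset (Finset ℕ),
      IsInitSeg (EM n k t t) G (EM n k (t + 2) (t + 1)).card →
      (Finset.shadow^[ℓ] (EM n k (t + 2) (t + 1))).card < (Finset.shadow^[ℓ] G).card :=
  stmt13_general k t ℓ hk hℓ1 hℓt
end

section
/- For integers t ≥ 1 and 1 ≤ ℓ < t, the inequality C(t+2, t+1−ℓ) < (t+2)·C(t, t−ℓ) holds. -/
theorem stmt14 (t ℓ : ℕ) (ht : 1 ≤ t) (hℓ1 : 1 ≤ ℓ) (hℓt : ℓ < t) :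
    (t + 2).choose (t + 1 - ℓ) < (t + 2) * t.choose (t - ℓ) := by
  obtain ⟨m, rfl⟩ : ∃ m, ℓ = m + 1 := ⟨ℓ - 1, by omega⟩
  have h1 : (t + 2).choose (t + 1 - (m + 1)) = (t + 2).choose (m + 2) := by
    rw [show t + 1 - (m + 1) = (t + 2) - (m + 2) by omega, Nat.choose_symm (by omega)]
  have h2 : t.choose (t - (m + 1)) = t.choose (m + 1) := by
    rw [show t.choose (m+1) = t.choose (t - (m+1)) from (Nat.choose_symm (by omega)).symm]
  rw [h1, h2]
  -- multiply both sides by (m+2)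
  have key : (t + 1).choose (m + 1) < (m + 2) * t.choose (m + 1) := by
    rw [Nat.choose_succ_succ]
    have hr : t.choose (m + 1) * (m + 1) = t.choose m * (t - m) :=
      Nat.choose_succ_right_eq t m
    have hp : 0 < t.choose m := Nat.choose_pos (by omega)
    have h2m : 2 ≤ t - m := by omega
    nlinarith [hr, hp, h2m]
  have hmul : (t + 2).choose (m + 2) * (m + 2) = (t + 2) * (t + 1).choose (m + 1) :=
    (Nat.add_one_mul_choose_eq (t + 1) (m + 1)).symm
  have : (t + 2).choose (m + 2) * (m + 2) < (t + 2) * t.choose (m + 1) * (m + 2) := by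
    rw [hmul]
    calc (t + 2) * (t + 1).choose (m + 1) < (t + 2) * ((m + 2) * t.choose (m + 1)) :=
          by have := Nat.mul_lt_mul_of_le_of_lt (le_refl (t+2)) key (by omega); exact this
      _ = (t + 2) * t.choose (m + 1) * (m + 2) := by ring
  exact Nat.lt_of_mul_lt_mul_right this
end

section
/- For t-intersecting families of large size, the ℓ-th shadow ratio strictly exceeds Katona's bound for ℓ < t: for integers 1 ≤ ℓ ≤ t < k, one has C(t,ℓ) ≥ C(2k−t, k−ℓ)/C(2k−t, k), with equality if and only if ℓ = t. -/
/-!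
With `n = 2k - t` and `k = t + m`, double counting chains `A ⊆ B ⊆ [n]` with `|B| = k`,
`|A| = k - ℓ` gives `C(n, k-ℓ) / C(n, k) = C(t+m, ℓ) / C(ℓ+m, ℓ)`, so the claim is
`C(t+m, ℓ) ≤ C(t, ℓ) C(ℓ+m, ℓ)`. Expanding both `C(t+m, ℓ)` and `C(ℓ+m, ℓ)` by Vandermonde,
this follows termwise from `C(t, i) ≤ C(t, ℓ) C(ℓ, i) = C(t, i) C(t-i, ℓ-i)`, and the term
`i = ℓ - 1` is strict as soon as `ℓ < t` and `m > 0`.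
-/

open Finset

namespace Nat

theorem choose_le_choose_mul_choose {t ℓ i : ℕ} (hiℓ : i ≤ ℓ) (hℓt : ℓ ≤ t) :
    t.choose i ≤ t.choose ℓ * ℓ.choose i := by
  rw [choose_mul hiℓ]
  exact Nat.le_mul_of_pos_right _ (choose_pos (by omega))

theorem choose_lt_choose_succ_mul {t i : ℕ} (hit : i + 1 < t) :
    t.choose i < t.choose (i + 1) * (i + 1) := by
  rw [choose_succ_right_eq]
  exact lt_mul_of_one_lt_right (choose_pos (by omega)) (by omega)

theorem add_choose_le_choose_mul_add_choose {t ℓ : ℕ} (hℓt : ℓ ≤ t) (m : ℕ) :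
    (t + m).choose ℓ ≤ t.choose ℓ * (ℓ + m).choose ℓ := by
  rw [add_choose_eq, add_choose_eq, mul_sum]
  refine sum_le_sum fun ij hij => ?_
  rw [← mul_assoc]
  exact Nat.mul_le_mul_right _
    (choose_le_choose_mul_choose (HasAntidiagonal.antidiagonal.fst_le hij) hℓt)

theorem add_choose_lt_choose_mul_add_choose {t ℓ m : ℕ} (hℓ : 0 < ℓ) (hℓt : ℓ < t)
    (hm : 0 < m) : (t + m).choose ℓ < t.choose ℓ * (ℓ + m).choose ℓ := by
  obtain ⟨i, rfl⟩ : ∃ i, ℓ = i + 1 := ⟨ℓ - 1, by omega⟩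
  rw [add_choose_eq, add_choose_eq, mul_sum]
  refine sum_lt_sum (fun ij hij => ?_) ⟨(i, 1), by simp, ?_⟩
  · rw [← mul_assoc]
    exact Nat.mul_le_mul_right _
      (choose_le_choose_mul_choose (HasAntidiagonal.antidiagonal.fst_le hij) hℓt.le)
  · dsimp only
    rw [← mul_assoc, choose_one_right, choose_succ_self_right]
    exact Nat.mul_lt_mul_of_pos_right (choose_lt_choose_succ_mul (by omega)) hm

theorem choose_mul_add_choose_eq_add_choose_iff {t ℓ m : ℕ} (hℓ : 0 < ℓ) (hℓt : ℓ ≤ t)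
    (hm : 0 < m) : t.choose ℓ * (ℓ + m).choose ℓ = (t + m).choose ℓ ↔ ℓ = t := by
  refine ⟨fun h => ?_, fun h => by rw [h, choose_self, one_mul]⟩
  by_contra hne
  exact (add_choose_lt_choose_mul_add_choose hℓ (hℓt.lt_of_ne hne) hm).ne' h

theorem cast_choose_sub_div_choose {K : Type*} [Field K] [CharZero K] {n k ℓ : ℕ}
    (hℓk : ℓ ≤ k) (hkn : k ≤ n) :
    (n.choose (k - ℓ) : K) / n.choose k = k.choose ℓ / (n - k + ℓ).choose ℓ := by
  have hchain : n.choose k * k.choose ℓ = n.choose (k - ℓ) * (n - k + ℓ).choose ℓ := by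
    rw [← choose_symm hℓk, choose_mul (Nat.sub_le k ℓ)]
    congr 2 <;> omega
  rw [div_eq_div_iff (by exact_mod_cast (choose_pos hkn).ne')
    (by exact_mod_cast (choose_pos (by omega)).ne')]
  exact_mod_cast hchain.symm.trans (mul_comm _ _)

end Nat

theorem stmt15 (k t ℓ : ℕ) (hℓ1 : 1 ≤ ℓ) (hℓt : ℓ ≤ t) (htk : t < k) :
    (t.choose ℓ : ℝ) ≥ ((2 * k - t).choose (k - ℓ) : ℝ) / ((2 * k - t).choose k : ℝ) ∧
    ((t.choose ℓ : ℝ) = ((2 * k - t).choose (k - ℓ) : ℝ) / ((2 * k - t).choose k : ℝ) ↔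
      ℓ = t) := by
  obtain ⟨m, rfl⟩ := Nat.exists_eq_add_of_le htk.le
  have hpos : (0 : ℝ) < (ℓ + m).choose ℓ := by exact_mod_cast Nat.choose_pos (by omega)
  rw [Nat.cast_choose_sub_div_choose (by omega) (by omega),
    show 2 * (t + m) - t - (t + m) + ℓ = ℓ + m by omega,
    ge_iff_le, div_le_iff₀ hpos, eq_div_iff hpos.ne']
  exact ⟨by exact_mod_cast Nat.add_choose_le_choose_mul_add_choose hℓt m,
    by exact_mod_cast Nat.choose_mul_add_choose_eq_add_choose_iff hℓ1 hℓt (by omega)⟩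
end
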